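/- arXiv:2008.12070 — 7 statements merged into one kernel-verified Lean document; each statement's English description precedes it below -/
import Mathlib

section
/- The L²-closure of {γ∘V : γ a bounded linear operator H→G} is contained in {γ∘V : γ linear (possibly unbounded) with γ∘V ∈ L²(P;G)}; that is, any L²(P;G)-limit of random variables of the form γₙ∘V with γₙ bounded linear equals γ∘V almost surely for some linear map γ:H→G with γ∘V square-integrable. -/
open MeasureTheory Filter Topology

/-! The limit `W` of `Aₙ ∘ V` in `L²` is also the almost sure limit of a subsequence
`A_{nₖ} ∘ V`. The points `x` at which `A_{nₖ} x` converges form a subspace containing `V ω`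
for almost every `ω`, and the pointwise limit is linear on it; any linear extension `γ` of
this limit to all of `H` satisfies `W = γ ∘ V` almost surely. -/

namespace LinearMap

variable {ι R K E F : Type*}

def convergenceDomain [Semiring R] [AddCommMonoid E] [Module R E] [AddCommMonoid F] [Module R F]
    [TopologicalSpace F] [ContinuousAdd F] [ContinuousConstSMul R F]
    (f : ι → E →ₗ[R] F) (l : Filter ι) : Submodule R E where
  carrier := {x | ∃ y, Tendsto (fun i => f i x) l (𝓝 y)}
  zero_mem' := ⟨0, by simp only [map_zero, tendsto_const_nhds]⟩
  add_mem' := by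
    rintro x x' ⟨y, hy⟩ ⟨y', hy'⟩
    exact ⟨y + y', by simpa only [map_add] using hy.add hy'⟩
  smul_mem' := by
    rintro c x ⟨y, hy⟩
    exact ⟨c • y, by simpa only [map_smul] using hy.const_smul c⟩

theorem exists_eq_of_tendsto [Field K] [AddCommGroup E] [Module K E] [AddCommGroup F]
    [Module K F] [TopologicalSpace F] [T2Space F] [ContinuousAdd F] [ContinuousConstSMul K F]
    (f : ι → E →ₗ[K] F) (l : Filter ι) [l.NeBot] :
    ∃ γ : E →ₗ[K] F, ∀ x y, Tendsto (fun i => f i x) l (𝓝 y) → γ x = y := by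
  set S := convergenceDomain f l
  have hlim : Tendsto (fun i (x : S) => f i x) l (𝓝 fun x => limUnder l fun i => f i x) :=
    tendsto_pi_nhds.2 fun x => tendsto_nhds_limUnder x.2
  obtain ⟨γ, hγ⟩ := (linearMapOfTendsto _ (fun i => (f i).comp S.subtype) hlim).exists_extend
  refine ⟨γ, fun x y hxy => ?_⟩
  have hγx : γ x = limUnder l fun i => f i x := LinearMap.congr_fun hγ ⟨x, y, hxy⟩
  exact hγx.trans (tendsto_nhds_unique (tendsto_nhds_limUnder ⟨y, hxy⟩) hxy)

end LinearMap

theorem MeasureTheory.Lp.exists_seq_mem_ae_tendsto_of_mem_closure {Ω E : Type*}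
    [MeasurableSpace Ω] {μ : Measure Ω} [NormedAddCommGroup E] {p : ENNReal} [Fact (1 ≤ p)]
    {s : Set (Lp E p μ)} {W : Lp E p μ} (hW : W ∈ closure s) :
    ∃ u : ℕ → Lp E p μ, (∀ n, u n ∈ s) ∧
      ∀ᵐ ω ∂μ, Tendsto (fun n => u n ω) atTop (𝓝 (W ω)) := by
  obtain ⟨u, hu_mem, hu_lim⟩ := mem_closure_iff_seq_limit.1 hW
  obtain ⟨ns, -, h_ae⟩ := (tendstoInMeasure_of_tendsto_Lp hu_lim).exists_seq_tendsto_ae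
  exact ⟨u ∘ ns, fun n => hu_mem (ns n), h_ae⟩

theorem closure_boundedLinear_comp_subset_linear_comp_general
    {Ω : Type*} [MeasurableSpace Ω] (μ : Measure Ω)
    {G H : Type*}
    [NormedAddCommGroup G] [InnerProductSpace ℝ G]
    [NormedAddCommGroup H] [InnerProductSpace ℝ H]
    (V : Lp H 2 μ) (W : Lp G 2 μ)
    (hW : W ∈ closure {f : Lp G 2 μ |
        ∃ A : H →L[ℝ] G, (f : Ω → G) =ᵐ[μ] fun ω => A (V ω)}) :
    ∃ γ : H →ₗ[ℝ] G, MemLp (fun ω => γ (V ω)) 2 μ ∧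
      (W : Ω → G) =ᵐ[μ] fun ω => γ (V ω) := by
  obtain ⟨u, hu, hu_ae⟩ := Lp.exists_seq_mem_ae_tendsto_of_mem_closure hW
  choose A hA using hu
  obtain ⟨γ, hγ⟩ := LinearMap.exists_eq_of_tendsto (fun n => (A n : H →ₗ[ℝ] G)) atTop
  have h_eq : (W : Ω → G) =ᵐ[μ] fun ω => γ (V ω) := by
    filter_upwards [hu_ae, ae_all_iff.2 hA] with ω hω hAω
    refine (hγ (V ω) (W ω) ?_).symm
    simpa only [hAω, ContinuousLinearMap.coe_coe] using hω
  exact ⟨γ, (Lp.memLp W).ae_eq h_eq, h_eq⟩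

/-- Any `L²(P;G)`-limit of random variables of the form `γₙ ∘ V` with
`γₙ : H → G` bounded linear equals `γ ∘ V` almost surely for some (possibly unbounded)
linear map `γ : H → G` with `γ ∘ V` square-integrable. -/
theorem closure_boundedLinear_comp_subset_linear_comp
    {Ω : Type*} [MeasurableSpace Ω] (μ : Measure Ω) [IsProbabilityMeasure μ]
    {G H : Type*}
    [NormedAddCommGroup G] [InnerProductSpace ℝ G] [CompleteSpace G] [SecondCountableTopology G]
    [NormedAddCommGroup H] [InnerProductSpace ℝ H] [CompleteSpace H] [SecondCountableTopology H]
    (V : Lp H 2 μ) (W : Lp G 2 μ)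
    (hW : W ∈ closure {f : Lp G 2 μ |
        ∃ A : H →L[ℝ] G, (f : Ω → G) =ᵐ[μ] fun ω => A (V ω)}) :
    ∃ γ : H →ₗ[ℝ] G, MemLp (fun ω => γ (V ω)) 2 μ ∧
      (W : Ω → G) =ᵐ[μ] fun ω => γ (V ω) :=
  closure_boundedLinear_comp_subset_linear_comp_general μ V W hW
end

section
/- The linear conditional expectation is stable: if the conditional expectation E[U|V] lies in the L²-closure of affine transformations of V, then E^A[U|V] = E[U|V] almost surely. In particular, E^A[V|V] = V and E^A[φ∘V|V] = φ∘V a.s. for any bounded affine map φ. -/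
/-!
Let `K` be the closure in `L²` of the affine transformations of `V`; `E^A[U|V]` is the orthogonal
projection of `U` onto `K`, and a point `Y ∈ K` with `U - Y ⊥ K` can only be that projection.
Every element of `K` is `σ(V)`-measurable, and `U - E[U|σ(V)]` is orthogonal to all
`σ(V)`-measurable `L²` functions, so `Y = E[U|σ(V)]` qualifies whenever it lies in `K`.
An affine transformation `W` of `V` lies in `K` and `W - W = 0 ⊥ K`, so it is its own projection.
-/

open MeasureTheory

noncomputable section

variable {Ω : Type*} [MeasurableSpace Ω]

/-- The set of (classes of) bounded affine transformations `ω ↦ b + A (V ω)` of `V` in `L²`. -/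
def affSet {H G : Type*} [NormedAddCommGroup H] [InnerProductSpace ℝ H]
    [NormedAddCommGroup G] [InnerProductSpace ℝ G]
    (μ : Measure Ω) (V : Lp H 2 μ) : Set (Lp G 2 μ) :=
  {f | ∃ (b : G) (A : H →L[ℝ] G), (f : Ω → G) =ᵐ[μ] fun ω => b + A (V ω)}

/-- `IsLCE μ U UA V` : `UA` is the linear conditional expectation `E^A[U|V]`, i.e. the
orthogonal projection of `U` in `L²(P;G)` onto the `L²`-closure of the set of bounded affine
transformations of `V`. -/
def IsLCE {H G : Type*} [NormedAddCommGroup H] [InnerProductSpace ℝ H]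
    [NormedAddCommGroup G] [InnerProductSpace ℝ G]
    (μ : Measure Ω) (U UA : Lp G 2 μ) (V : Lp H 2 μ) : Prop :=
  UA ∈ closure (affSet μ V) ∧
  ∀ s ∈ closure (affSet μ V), @inner ℝ _ _ (U - UA) s = (0 : ℝ)

/-- The cross-covariance operator `Cov[X,Y] = E[(X−E X) ⊗ (Y−E Y)]` of `X` and `Y`,
as the map `f ↦ E[⟪Y − E Y, f⟫ • (X − E X)]`. -/
def cov {E F : Type*} [NormedAddCommGroup E] [InnerProductSpace ℝ E] [CompleteSpace E]
    [NormedAddCommGroup F] [InnerProductSpace ℝ F] [CompleteSpace F]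
    (μ : Measure Ω) (X : Ω → E) (Y : Ω → F) : F → E :=
  fun f => ∫ ω, (@inner ℝ _ _ (Y ω - ∫ ω', Y ω' ∂μ) f) • (X ω - ∫ ω', X ω' ∂μ) ∂μ

open scoped InnerProductSpace

theorem Submodule.eq_of_mem_of_sub_mem_orthogonal {𝕜 E : Type*} [RCLike 𝕜]
    [NormedAddCommGroup E] [InnerProductSpace 𝕜 E] {K : Submodule 𝕜 E} {x p q : E}
    (hp : p ∈ K) (hq : q ∈ K) (hxp : x - p ∈ Kᗮ) (hxq : x - q ∈ Kᗮ) : p = q := by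
  have hpq : p - q ∈ K ⊓ Kᗮ := ⟨K.sub_mem hp hq, by simpa using Kᗮ.sub_mem hxq hxp⟩
  rwa [K.inf_orthogonal_eq_bot, Submodule.mem_bot, sub_eq_zero] at hpq

theorem inner_sub_condExp_eq_zero {α G : Type*} [NormedAddCommGroup G] [InnerProductSpace ℝ G]
    [CompleteSpace G] {m m₀ : MeasurableSpace α} {μ : Measure α} [IsFiniteMeasure μ]
    (hm : m ≤ m₀) {U CE s : Lp G 2 μ} (hCE : CE =ᵐ[μ] μ[U | m])
    (hs : AEStronglyMeasurable[m] s μ) : ⟪U - CE, s⟫_ℝ = 0 := by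
  have hCE_eq : CE = (condExpL2 G ℝ hm U : Lp G 2 μ) := by
    refine Lp.ext (hCE.trans ?_)
    simpa using ((Lp.memLp U).condExpL2_ae_eq_condExp hm).symm
  rw [inner_sub_left, hCE_eq, inner_condExpL2_eq_inner_fun hm U s hs, sub_self]

section Affine

variable {H G : Type*} [NormedAddCommGroup H] [InnerProductSpace ℝ H]
  [NormedAddCommGroup G] [InnerProductSpace ℝ G] (μ : Measure Ω) (V : Lp H 2 μ)

def affSubmodule : Submodule ℝ (Lp G 2 μ) where
  carrier := affSet μ V
  zero_mem' := ⟨0, 0, by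
    simp only [zero_apply, add_zero]
    exact Lp.coeFn_zero G 2 μ⟩
  add_mem' := by
    rintro f g ⟨b₁, A₁, hf⟩ ⟨b₂, A₂, hg⟩
    refine ⟨b₁ + b₂, A₁ + A₂, ?_⟩
    filter_upwards [Lp.coeFn_add f g, hf, hg] with ω hfg hf hg
    simp only [hfg, Pi.add_apply, hf, hg, add_apply]
    abel
  smul_mem' := by
    rintro c f ⟨b, A, hf⟩
    refine ⟨c • b, c • A, ?_⟩
    filter_upwards [Lp.coeFn_smul c f, hf] with ω hcf hf
    simp only [hcf, Pi.smul_apply, hf, smul_add, smul_apply]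

theorem mem_closure_affSet_iff {f : Lp G 2 μ} :
    f ∈ closure (affSet μ V) ↔ f ∈ (affSubmodule μ V).topologicalClosure := by
  rw [← SetLike.mem_coe, Submodule.topologicalClosure_coe]
  rfl

variable {μ V}

theorem IsLCE.eq_of_mem_of_sub_mem_orthogonal {U UA Y : Lp G 2 μ} (h : IsLCE μ U UA V)
    (hY : Y ∈ (affSubmodule μ V).topologicalClosure)
    (hUY : U - Y ∈ (affSubmodule μ V).topologicalClosureᗮ) : UA = Y := by
  refine Submodule.eq_of_mem_of_sub_mem_orthogonal ?_ hY ?_ hUY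
  · exact (mem_closure_affSet_iff μ V).1 h.1
  · rw [Submodule.mem_orthogonal']
    exact fun s hs => h.2 s ((mem_closure_affSet_iff μ V).2 hs)

theorem aestronglyMeasurable_comap_of_mem_closure_affSet [MeasurableSpace H] [BorelSpace H]
    [CompleteSpace G] {f : Lp G 2 μ} (hf : f ∈ closure (affSet μ V)) :
    AEStronglyMeasurable[MeasurableSpace.comap V ‹MeasurableSpace H›] f μ := by
  have hV : StronglyMeasurable[MeasurableSpace.comap V ‹MeasurableSpace H›] V :=
    stronglyMeasurable_iff_measurable_separable.2
      ⟨comap_measurable V, (Lp.stronglyMeasurable V).isSeparable_range⟩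
  refine closure_minimal ?_
    (isClosed_aestronglyMeasurable (Lp.stronglyMeasurable V).measurable.comap_le) hf
  rintro g ⟨b, A, hg⟩
  exact ⟨_, (A.continuous.comp_stronglyMeasurable hV).const_add b, hg⟩

theorem sub_condExp_comap_mem_orthogonal [IsFiniteMeasure μ] [MeasurableSpace H] [BorelSpace H]
    [CompleteSpace G] {U CE : Lp G 2 μ}
    (hCE : CE =ᵐ[μ] μ[U | MeasurableSpace.comap V ‹MeasurableSpace H›]) :
    U - CE ∈ (affSubmodule μ V).topologicalClosureᗮ := by
  rw [Submodule.mem_orthogonal']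
  intro s hs
  exact inner_sub_condExp_eq_zero (Lp.stronglyMeasurable V).measurable.comap_le hCE
    (aestronglyMeasurable_comap_of_mem_closure_affSet ((mem_closure_affSet_iff μ V).2 hs))

end Affine

theorem lce_stability_general
    (μ : Measure Ω) [IsProbabilityMeasure μ]
    {F G H : Type*}
    [NormedAddCommGroup F] [InnerProductSpace ℝ F]
    [NormedAddCommGroup G] [InnerProductSpace ℝ G] [CompleteSpace G]
    [NormedAddCommGroup H] [InnerProductSpace ℝ H]
    [MeasurableSpace H] [BorelSpace H]
    (U UA : Lp G 2 μ) (V : Lp H 2 μ) (CE : Lp G 2 μ)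
    (hCE : (CE : Ω → G) =ᵐ[μ] μ[(U : Ω → G) | MeasurableSpace.comap (V : Ω → H) ‹MeasurableSpace H›])
    (hCEmem : CE ∈ closure (affSet μ V))
    (hUA : IsLCE μ U UA V)
    (b : F) (A : H →L[ℝ] F) (W WA : Lp F 2 μ)
    (hW : (W : Ω → F) =ᵐ[μ] fun ω => b + A (V ω))
    (hWA : IsLCE μ W WA V) :
    ((UA : Ω → G) =ᵐ[μ]
      μ[(U : Ω → G) | MeasurableSpace.comap (V : Ω → H) ‹MeasurableSpace H›]) ∧
    (WA : Ω → F) =ᵐ[μ] (W : Ω → F) := by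
  have hUA_eq : UA = CE :=
    hUA.eq_of_mem_of_sub_mem_orthogonal ((mem_closure_affSet_iff μ V).1 hCEmem)
      (sub_condExp_comap_mem_orthogonal hCE)
  have hWA_eq : WA = W :=
    hWA.eq_of_mem_of_sub_mem_orthogonal
      ((mem_closure_affSet_iff μ V).1 (subset_closure ⟨b, A, hW⟩)) (by simp)
  exact ⟨hUA_eq ▸ hCE, by rw [hWA_eq]⟩

/-- Stability of the LCE: if the conditional expectation `E[U|σ(V)]` lies in the
`L²`-closure of affine transformations of `V`, then `E^A[U|V] = E[U|σ(V)]` a.s.; in particular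
`E^A[φ∘V|V] = φ∘V` a.s. for any bounded affine map `φ` (and so `E^A[V|V] = V`). -/
theorem lce_stability
    (μ : Measure Ω) [IsProbabilityMeasure μ]
    {F G H : Type*}
    [NormedAddCommGroup F] [InnerProductSpace ℝ F] [CompleteSpace F] [SecondCountableTopology F]
    [NormedAddCommGroup G] [InnerProductSpace ℝ G] [CompleteSpace G] [SecondCountableTopology G]
    [NormedAddCommGroup H] [InnerProductSpace ℝ H] [CompleteSpace H] [SecondCountableTopology H]
    [MeasurableSpace H] [BorelSpace H]
    (U UA : Lp G 2 μ) (V : Lp H 2 μ) (CE : Lp G 2 μ)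
    (hCE : (CE : Ω → G) =ᵐ[μ] μ[(U : Ω → G) | MeasurableSpace.comap (V : Ω → H) ‹MeasurableSpace H›])
    (hCEmem : CE ∈ closure (affSet μ V))
    (hUA : IsLCE μ U UA V)
    (b : F) (A : H →L[ℝ] F) (W WA : Lp F 2 μ)
    (hW : (W : Ω → F) =ᵐ[μ] fun ω => b + A (V ω))
    (hWA : IsLCE μ W WA V) :
    ((UA : Ω → G) =ᵐ[μ]
      μ[(U : Ω → G) | MeasurableSpace.comap (V : Ω → H) ‹MeasurableSpace H›]) ∧
    (WA : Ω → F) =ᵐ[μ] (W : Ω → F) :=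
  lce_stability_general μ U UA V CE hCE hCEmem hUA b A W WA hW hWA

end
end

section
/- Tower property through a coarser variable: if σ(W) ⊆ σ(V), then E^A[E[U|V] | W] = E^A[U|W] almost surely. -/
open MeasureTheory

noncomputable section

variable {Ω : Type*} [MeasurableSpace Ω]

/-! The conditional expectation `E[U|V]` is the orthogonal projection of `U` onto the
`σ(V)`-measurable part of `L²`. When `σ(W) ⊆ σ(V)`, every affine transformation of `W` lies in
that subspace, so `U - E[U|V]` is orthogonal to the closed subspace onto which `E^A[·|W]`
projects, and the two linear conditional expectations coincide by linearity of the projection. -/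

theorem inner_eq_zero_of_mem_closure {E : Type*} [NormedAddCommGroup E] [InnerProductSpace ℝ E]
    {S : Set E} {x : E} (h : ∀ s ∈ S, @inner ℝ _ _ x s = 0) :
    ∀ s ∈ closure S, @inner ℝ _ _ x s = 0 :=
  fun _ hs => closure_minimal h (isClosed_eq (by fun_prop) (by fun_prop)) hs

section

variable {α : Type*} {m m0 : MeasurableSpace α} {μ : Measure α}
  {F G : Type*} [NormedAddCommGroup F] [InnerProductSpace ℝ F]
  [NormedAddCommGroup G] [InnerProductSpace ℝ G]

theorem inner_sub_eq_zero_of_ae_eq_condExp [IsFiniteMeasure μ] [CompleteSpace G] (hm : m ≤ m0)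
    {U CE g : Lp G 2 μ} (hCE : (CE : α → G) =ᵐ[μ] μ[(U : α → G) | m])
    (hg : AEStronglyMeasurable[m] (g : α → G) μ) : @inner ℝ _ _ (U - CE) g = 0 := by
  have hCE_eq : CE = (condExpL2 G ℝ hm U : Lp G 2 μ) := by
    have hL2 := (Lp.memLp U).condExpL2_ae_eq_condExp (𝕜 := ℝ) hm
    rw [Lp.toLp_coeFn] at hL2
    exact Lp.ext (hCE.trans hL2.symm)
  rw [hCE_eq, inner_sub_left, inner_condExpL2_eq_inner_fun hm U g hg, sub_self]

theorem sub_mem_affSet {W : Lp F 2 μ} {f g : Lp G 2 μ} (hf : f ∈ affSet μ W)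
    (hg : g ∈ affSet μ W) : f - g ∈ affSet μ W := by
  obtain ⟨b₁, A₁, hf⟩ := hf
  obtain ⟨b₂, A₂, hg⟩ := hg
  refine ⟨b₁ - b₂, A₁ - A₂, ?_⟩
  filter_upwards [hf, hg, Lp.coeFn_sub f g] with ω hfω hgω hsub
  rw [hsub, Pi.sub_apply, hfω, hgω, sub_apply]
  abel

theorem sub_mem_closure_affSet {W : Lp F 2 μ} {f g : Lp G 2 μ} (hf : f ∈ closure (affSet μ W))
    (hg : g ∈ closure (affSet μ W)) : f - g ∈ closure (affSet μ W) :=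
  map_mem_closure₂ continuous_sub hf hg fun _ ha _ hb => sub_mem_affSet ha hb

theorem aestronglyMeasurable_of_mem_affSet [MeasurableSpace F] [OpensMeasurableSpace F]
    [SecondCountableTopology F] {W : Lp F 2 μ}
    (hW : MeasurableSpace.comap (W : α → F) ‹MeasurableSpace F› ≤ m) {f : Lp G 2 μ}
    (hf : f ∈ affSet μ W) : AEStronglyMeasurable[m] (f : α → G) μ := by
  obtain ⟨b, A, hf⟩ := hf
  have hWm : StronglyMeasurable[m] (W : α → F) :=
    (measurable_iff_comap_le.mpr hW).stronglyMeasurable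
  exact ⟨_, (A.continuous.comp_stronglyMeasurable hWm).const_add b, hf⟩

namespace IsLCE

theorem sub {W : Lp F 2 μ} {U X UA XA : Lp G 2 μ} (hU : IsLCE μ U UA W)
    (hX : IsLCE μ X XA W) : IsLCE μ (U - X) (UA - XA) W := by
  refine ⟨sub_mem_closure_affSet hU.1 hX.1, fun s hs => ?_⟩
  rw [show U - X - (UA - XA) = (U - UA) - (X - XA) by abel, inner_sub_left, hU.2 s hs,
    hX.2 s hs, sub_zero]

theorem eq_zero_of_forall_inner_eq_zero {W : Lp F 2 μ} {U UA : Lp G 2 μ} (hU : IsLCE μ U UA W)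
    (horth : ∀ s ∈ closure (affSet μ W), @inner ℝ _ _ U s = 0) : UA = 0 := by
  have hself : @inner ℝ _ _ UA UA = 0 := by
    have h := hU.2 UA hU.1
    rwa [inner_sub_left, horth UA hU.1, zero_sub, neg_eq_zero] at h
  exact inner_self_eq_zero.mp hself

end IsLCE

end

theorem lce_tower_coarser_general
    (μ : Measure Ω) [IsProbabilityMeasure μ]
    {F G H : Type*}
    [NormedAddCommGroup F] [InnerProductSpace ℝ F] [SecondCountableTopology F]
    [NormedAddCommGroup G] [InnerProductSpace ℝ G] [CompleteSpace G]
    [NormedAddCommGroup H] [InnerProductSpace ℝ H]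
    [MeasurableSpace H] [BorelSpace H] [MeasurableSpace F] [BorelSpace F]
    (U : Lp G 2 μ) (V : Lp H 2 μ) (W : Lp F 2 μ)
    (hsub : MeasurableSpace.comap (W : Ω → F) ‹MeasurableSpace F› ≤
            MeasurableSpace.comap (V : Ω → H) ‹MeasurableSpace H›)
    (CE Z UW : Lp G 2 μ)
    (hCE : (CE : Ω → G) =ᵐ[μ]
      μ[(U : Ω → G) | MeasurableSpace.comap (V : Ω → H) ‹MeasurableSpace H›])
    (hZ : IsLCE μ CE Z W)
    (hUW : IsLCE μ U UW W) :
    (Z : Ω → G) =ᵐ[μ] (UW : Ω → G) := by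
  have hmV : MeasurableSpace.comap (V : Ω → H) ‹MeasurableSpace H› ≤ ‹MeasurableSpace Ω› :=
    measurable_iff_comap_le.mp (Lp.stronglyMeasurable V).measurable
  have horth : ∀ s ∈ closure (affSet μ W), @inner ℝ _ _ (U - CE) s = 0 :=
    inner_eq_zero_of_mem_closure fun s hs =>
      inner_sub_eq_zero_of_ae_eq_condExp hmV hCE (aestronglyMeasurable_of_mem_affSet hsub hs)
  have hdiff : UW - Z = 0 := (hUW.sub hZ).eq_zero_of_forall_inner_eq_zero horth
  rw [sub_eq_zero.mp hdiff]

/-- Tower property through a coarser variable: if `σ(W) ⊆ σ(V)` then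
`E^A[E[U|V] | W] = E^A[U|W]` a.s. -/
theorem lce_tower_coarser
    (μ : Measure Ω) [IsProbabilityMeasure μ]
    {F G H : Type*}
    [NormedAddCommGroup F] [InnerProductSpace ℝ F] [CompleteSpace F] [SecondCountableTopology F]
    [NormedAddCommGroup G] [InnerProductSpace ℝ G] [CompleteSpace G] [SecondCountableTopology G]
    [NormedAddCommGroup H] [InnerProductSpace ℝ H] [CompleteSpace H] [SecondCountableTopology H]
    [MeasurableSpace H] [BorelSpace H] [MeasurableSpace F] [BorelSpace F]
    (U : Lp G 2 μ) (V : Lp H 2 μ) (W : Lp F 2 μ)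
    (hsub : MeasurableSpace.comap (W : Ω → F) ‹MeasurableSpace F› ≤
            MeasurableSpace.comap (V : Ω → H) ‹MeasurableSpace H›)
    (CE Z UW : Lp G 2 μ)
    (hCE : (CE : Ω → G) =ᵐ[μ]
      μ[(U : Ω → G) | MeasurableSpace.comap (V : Ω → H) ‹MeasurableSpace H›])
    (hZ : IsLCE μ CE Z W)
    (hUW : IsLCE μ U UW W) :
    (Z : Ω → G) =ᵐ[μ] (UW : Ω → G) :=
  lce_tower_coarser_general μ U V W hsub CE Z UW hCE hZ hUW

end
end

section
/- Idempotence tower property: E^A[U | E^A[U|V]] = E^A[U|V] almost surely. -/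
/-!
Every affine image `b + A ∘ W` of a `W` in the closed affine span of `V` lies again in that span,
so the closed affine span of `E^A[U|V]` sits inside that of `V`. As `E^A[U|V]` belongs to its own
closed affine span, it is therefore also the orthogonal projection of `U` onto that smaller set,
and such a projection is unique.
-/

open MeasureTheory

noncomputable section

variable {Ω : Type*} [MeasurableSpace Ω]

open scoped InnerProductSpace

theorem eq_of_forall_inner_sub_eq_zero {E : Type*} [NormedAddCommGroup E] [InnerProductSpace ℝ E]
    {S : Set E} {u x y : E} (hx : x ∈ S) (hy : y ∈ S)
    (hxS : ∀ s ∈ S, ⟪u - x, s⟫_ℝ = 0) (hyS : ∀ s ∈ S, ⟪u - y, s⟫_ℝ = 0) : x = y := by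
  have hxy : ⟪x - y, x - y⟫_ℝ = 0 := by
    calc ⟪x - y, x - y⟫_ℝ = ⟪u - y, x - y⟫_ℝ - ⟪u - x, x - y⟫_ℝ := by
          rw [← inner_sub_left, sub_sub_sub_cancel_left]
      _ = 0 := by simp only [inner_sub_right, hxS x hx, hxS y hy, hyS x hx, hyS y hy, sub_self]
  exact sub_eq_zero.mp (inner_self_eq_zero.mp hxy)

section AffineImage

variable {K H G : Type*} [NormedAddCommGroup K] [InnerProductSpace ℝ K]
  [NormedAddCommGroup H] [InnerProductSpace ℝ H] [NormedAddCommGroup G] [InnerProductSpace ℝ G]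
  (μ : Measure Ω)

theorem self_mem_affSet (V : Lp G 2 μ) : V ∈ affSet μ V :=
  ⟨0, ContinuousLinearMap.id ℝ G, Filter.Eventually.of_forall fun ω => by simp⟩

variable [IsFiniteMeasure μ]

def affineCompLp (b : G) (A : K →L[ℝ] G) (f : Lp K 2 μ) : Lp G 2 μ :=
  Lp.const 2 μ b + A.compLpL 2 μ f

variable {μ}

theorem coeFn_affineCompLp (b : G) (A : K →L[ℝ] G) (f : Lp K 2 μ) :
    (affineCompLp μ b A f : Ω → G) =ᵐ[μ] fun ω => b + A (f ω) := by
  filter_upwards [Lp.coeFn_add (Lp.const 2 μ b) (A.compLpL 2 μ f), Lp.coeFn_const 2 μ b,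
    A.coeFn_compLpL f] with ω h_add h_const h_comp
  simp only [affineCompLp, h_add, Pi.add_apply, h_const, Function.const_apply, h_comp]

theorem continuous_affineCompLp (b : G) (A : K →L[ℝ] G) :
    Continuous (affineCompLp μ b A) :=
  continuous_const.add (A.compLpL 2 μ).continuous

theorem affineCompLp_mem_affSet (b : G) (A : K →L[ℝ] G) {V : Lp H 2 μ} {f : Lp K 2 μ}
    (hf : f ∈ affSet μ V) : affineCompLp μ b A f ∈ affSet μ V := by
  obtain ⟨b', A', hf⟩ := hf
  refine ⟨b + A b', A.comp A', ?_⟩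
  filter_upwards [coeFn_affineCompLp b A f, hf] with ω h_aff h_f
  simp only [h_aff, h_f, map_add, ContinuousLinearMap.comp_apply, add_assoc]

theorem closure_affSet_subset {V : Lp H 2 μ} {W : Lp K 2 μ} (hW : W ∈ closure (affSet μ V)) :
    closure (affSet μ W : Set (Lp G 2 μ)) ⊆ closure (affSet μ V) := by
  refine closure_minimal ?_ isClosed_closure
  rintro s ⟨b, A, hs⟩
  have hs_eq : s = affineCompLp μ b A W := Lp.ext (hs.trans (coeFn_affineCompLp b A W).symm)
  rw [hs_eq]
  exact map_mem_closure (continuous_affineCompLp b A) hW fun _ => affineCompLp_mem_affSet b A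

end AffineImage

namespace IsLCE

variable {H K G : Type*} [NormedAddCommGroup H] [InnerProductSpace ℝ H]
  [NormedAddCommGroup K] [InnerProductSpace ℝ K] [NormedAddCommGroup G] [InnerProductSpace ℝ G]
  {μ : Measure Ω} {U UA : Lp G 2 μ} {V : Lp H 2 μ}

theorem unique {Z : Lp G 2 μ} (hUA : IsLCE μ U UA V) (hZ : IsLCE μ U Z V) : UA = Z :=
  eq_of_forall_inner_sub_eq_zero hUA.1 hZ.1 hUA.2 hZ.2

theorem of_closure_affSet_subset {W : Lp K 2 μ} (hUA : IsLCE μ U UA V)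
    (hmem : UA ∈ closure (affSet μ W))
    (hsub : closure (affSet μ W : Set (Lp G 2 μ)) ⊆ closure (affSet μ V)) :
    IsLCE μ U UA W :=
  ⟨hmem, fun s hs => hUA.2 s (hsub hs)⟩

end IsLCE

theorem lce_idempotent_tower_general
    (μ : Measure Ω) [IsProbabilityMeasure μ]
    {G H : Type*}
    [NormedAddCommGroup G] [InnerProductSpace ℝ G]
    [NormedAddCommGroup H] [InnerProductSpace ℝ H]
    (U UA Z : Lp G 2 μ) (V : Lp H 2 μ)
    (hUA : IsLCE μ U UA V)
    (hZ : IsLCE μ U Z UA) :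
    (Z : Ω → G) =ᵐ[μ] (UA : Ω → G) := by
  have hUA_self : IsLCE μ U UA UA :=
    hUA.of_closure_affSet_subset (subset_closure (self_mem_affSet μ UA))
      (closure_affSet_subset hUA.1)
  rw [hZ.unique hUA_self]

/-- Idempotence tower property: `E^A[U | E^A[U|V]] = E^A[U|V]` a.s. -/
theorem lce_idempotent_tower
    (μ : Measure Ω) [IsProbabilityMeasure μ]
    {G H : Type*}
    [NormedAddCommGroup G] [InnerProductSpace ℝ G] [CompleteSpace G] [SecondCountableTopology G]
    [NormedAddCommGroup H] [InnerProductSpace ℝ H] [CompleteSpace H] [SecondCountableTopology H]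
    (U UA Z : Lp G 2 μ) (V : Lp H 2 μ)
    (hUA : IsLCE μ U UA V)
    (hZ : IsLCE μ U Z UA) :
    (Z : Ω → G) =ᵐ[μ] (UA : Ω → G) :=
  lce_idempotent_tower_general μ U UA Z V hUA hZ

end
end

section
/- If ran C_{VU} ⊆ ran C_V, then C_V† C_{VU} : G → H is a well-defined bounded operator, and the affine map γ(v) := μ_U + (C_V† C_{VU})* (v − μ_V) satisfies: γ∘V is the orthogonal projection of U onto the L²-closure of affine transformations of V, i.e., E^A[U|V] = γ∘V almost surely. -/
/-!
`Q = C_V† C_{VU}` is `C_{VU}` followed by the inverse of `C_V` restricted to `(ker C_V)ᗮ`, where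
`C_V` is injective; it is bounded by the closed graph theorem.

The residual `W = (U - μ_U) - Q* (V - μ_V)` has mean zero, and
`E[⟪W, g⟫ ⟪V - μ_V, c⟫] = ⟪C_{VU} g - C_V Q g, c⟫ = 0` for all `g`, `c`. Expanding in a Hilbert
basis of `H` (countable since `H` is separable) and integrating term by term under dominated
convergence upgrades this to `E ⟪W, A (V - μ_V)⟫ = 0` for every bounded `A`. So `W = U - γ ∘ V`
is orthogonal to every affine transformation of `V`, hence to their closure, while `γ ∘ V` is
itself one of them.
-/

open MeasureTheory

noncomputable section

variable {Ω : Type*} [MeasurableSpace Ω]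

open Filter
open scoped InnerProductSpace

theorem Orthonormal.countable {𝕜 E ι : Type*} [RCLike 𝕜] [NormedAddCommGroup E]
    [InnerProductSpace 𝕜 E] [TopologicalSpace.SeparableSpace E] {v : ι → E}
    (hv : Orthonormal 𝕜 v) : Countable ι := by
  refine Pairwise.countable_of_isOpen_disjoint (s := fun i => Metric.ball (v i) (1 / 2))
    (fun i j hij => Metric.ball_disjoint_ball ?_) (fun _ => Metric.isOpen_ball)
    (fun _ => Metric.nonempty_ball.2 one_half_pos)
  have hsq : ‖v i - v j‖ ^ 2 = 2 := by
    rw [@norm_sub_sq 𝕜, hv.1 i, hv.1 j, hv.2 hij]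
    norm_num
  rw [dist_eq_norm]
  nlinarith [norm_nonneg (v i - v j)]

section PseudoInverse

variable {𝕜 G H K : Type*} [RCLike 𝕜]
  [NormedAddCommGroup G] [NormedSpace 𝕜 G] [NormedAddCommGroup H] [InnerProductSpace 𝕜 H]
  [NormedAddCommGroup K] [NormedSpace 𝕜 K]

namespace ContinuousLinearMap

theorem injOn_orthogonal_ker (T : H →L[𝕜] K) :
    Set.InjOn T (LinearMap.ker (T : H →ₗ[𝕜] K))ᗮ := by
  intro y hy z hz hyz
  rw [← sub_eq_zero, ← Submodule.mem_bot 𝕜, ← Submodule.inf_orthogonal_eq_bot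
    (LinearMap.ker (T : H →ₗ[𝕜] K))]
  exact ⟨by simp [hyz], Submodule.sub_mem _ hy hz⟩

theorem exists_mem_orthogonal_ker_apply_eq [CompleteSpace H] (T : H →L[𝕜] K) (x : H) :
    ∃ y ∈ (LinearMap.ker (T : H →ₗ[𝕜] K))ᗮ, T y = T x := by
  set N := LinearMap.ker (T : H →ₗ[𝕜] K)
  have : CompleteSpace N := (T.isClosed_ker).completeSpace_coe
  refine ⟨x - N.starProjection x, N.sub_starProjection_mem_orthogonal x, ?_⟩
  rw [map_sub, sub_eq_self]
  exact N.starProjection_apply_mem x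

end ContinuousLinearMap

theorem LinearMap.continuous_of_apply_eq_of_injOn [CompleteSpace G] [CompleteSpace H]
    {Q : G →ₗ[𝕜] H} {T : H →L[𝕜] K} {S : G →L[𝕜] K} {N : Set H} (hN : IsClosed N)
    (hT : Set.InjOn T N) (hQN : ∀ g, Q g ∈ N) (hTQ : ∀ g, T (Q g) = S g) : Continuous Q := by
  refine Q.continuous_of_seq_closed_graph fun u x y hux huy => hT ?_ (hQN x) ?_
  · exact hN.mem_of_tendsto huy (Eventually.of_forall fun n => hQN (u n))
  · refine tendsto_nhds_unique ((T.continuous.tendsto y).comp huy) ?_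
    rw [hTQ]
    simpa only [Function.comp_def, hTQ] using (S.continuous.tendsto x).comp hux

theorem ContinuousLinearMap.existsUnique_comp_eq_of_range_subset [CompleteSpace G]
    [CompleteSpace H] (T : H →L[𝕜] K) (S : G →L[𝕜] K) (h : Set.range S ⊆ Set.range T) :
    ∃! Q : G →L[𝕜] H, T.comp Q = S ∧ ∀ g, Q g ∈ (LinearMap.ker (T : H →ₗ[𝕜] K))ᗮ := by
  set N := (LinearMap.ker (T : H →ₗ[𝕜] K))ᗮ
  have hinj : Function.Injective ((T : H →ₗ[𝕜] K).domRestrict N) := fun y z hyz =>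
    Subtype.ext (T.injOn_orthogonal_ker y.2 z.2 hyz)
  have hS : ∀ g, S g ∈ LinearMap.range ((T : H →ₗ[𝕜] K).domRestrict N) := fun g => by
    obtain ⟨x, hx⟩ := h ⟨g, rfl⟩
    obtain ⟨y, hyN, hy⟩ := T.exists_mem_orthogonal_ker_apply_eq x
    exact ⟨⟨y, hyN⟩, hy.trans hx⟩
  let Q₀ : G →ₗ[𝕜] H := N.subtype ∘ₗ (LinearEquiv.ofInjective _ hinj).symm.toLinearMap ∘ₗ
    (S : G →ₗ[𝕜] K).codRestrict _ hS
  have hQ₀N : ∀ g, Q₀ g ∈ N := fun g => Subtype.coe_prop _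
  have hTQ₀ : ∀ g, T (Q₀ g) = S g := fun g =>
    LinearEquiv.ofInjective_symm_apply (f := (T : H →ₗ[𝕜] K).domRestrict N) (h := hinj) ⟨S g, hS g⟩
  refine ⟨⟨Q₀, Q₀.continuous_of_apply_eq_of_injOn (Submodule.isClosed_orthogonal _)
    T.injOn_orthogonal_ker hQ₀N hTQ₀⟩, ⟨ext hTQ₀, hQ₀N⟩, fun Q ⟨hQ, hQN⟩ => ext fun g => ?_⟩
  exact T.injOn_orthogonal_ker (hQN g) (hQ₀N g) ((DFunLike.congr_fun hQ g).trans (hTQ₀ g).symm)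

end PseudoInverse

section IntegralInner

variable {μ : Measure Ω} {E F : Type*} [NormedAddCommGroup E] [InnerProductSpace ℝ E]
  [NormedAddCommGroup F] [InnerProductSpace ℝ F]

theorem MeasureTheory.MemLp.integrable_inner {X Y : Ω → E} (hX : MemLp X 2 μ)
    (hY : MemLp Y 2 μ) :
    Integrable (fun ω => ⟪X ω, Y ω⟫_ℝ) μ :=
  (L2.integrable_inner (hX.toLp X) (hY.toLp Y)).congr <| by
    filter_upwards [hX.coeFn_toLp, hY.coeFn_toLp] with ω hXω hYω
    rw [hXω, hYω]

theorem HilbertBasis.hasSum_integral_inner_mul_inner {ι : Type*} [Countable ι]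
    (b : HilbertBasis ι ℝ E) {X Y : Ω → E} (hX : MemLp X 2 μ) (hY : MemLp Y 2 μ) :
    HasSum (fun i => ∫ ω, ⟪X ω, b i⟫_ℝ * ⟪b i, Y ω⟫_ℝ ∂μ) (∫ ω, ⟪X ω, Y ω⟫_ℝ ∂μ) := by
  -- Parseval turns the dominating series `∑ (⟪X, bᵢ⟫² + ⟪Y, bᵢ⟫²) / 2` into `(‖X‖² + ‖Y‖²) / 2`.
  have hbound : ∀ ω, HasSum
      (fun i => (⟪X ω, b i⟫_ℝ * ⟪b i, X ω⟫_ℝ + ⟪Y ω, b i⟫_ℝ * ⟪b i, Y ω⟫_ℝ) / 2)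
      ((⟪X ω, X ω⟫_ℝ + ⟪Y ω, Y ω⟫_ℝ) / 2) := fun ω =>
    ((b.hasSum_inner_mul_inner _ _).add (b.hasSum_inner_mul_inner _ _)).div_const 2
  refine hasSum_integral_of_dominated_convergence _
    (fun i => ((hX.inner_const _).integrable_mul (hY.const_inner _)).aestronglyMeasurable)
    (fun i => Eventually.of_forall fun ω => ?_) (Eventually.of_forall fun ω => (hbound ω).summable)
    ?_ (Eventually.of_forall fun ω => b.hasSum_inner_mul_inner _ _)
  · rw [real_inner_comm (X ω) (b i), real_inner_comm (b i) (Y ω), Real.norm_eq_abs, abs_mul]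
    nlinarith [sq_nonneg (|⟪X ω, b i⟫_ℝ| - |⟪b i, Y ω⟫_ℝ|), sq_abs ⟪X ω, b i⟫_ℝ,
      sq_abs ⟪b i, Y ω⟫_ℝ]
  · simp_rw [fun ω => (hbound ω).tsum_eq]
    exact ((hX.integrable_inner hX).add (hY.integrable_inner hY)).div_const 2

theorem integral_inner_eq_zero_of_integral_inner_mul_inner_eq_zero [CompleteSpace E]
    [SecondCountableTopology E] {X Y : Ω → E} (hX : MemLp X 2 μ) (hY : MemLp Y 2 μ)
    (h : ∀ a c : E, ∫ ω, ⟪X ω, a⟫_ℝ * ⟪Y ω, c⟫_ℝ ∂μ = 0) :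
    ∫ ω, ⟪X ω, Y ω⟫_ℝ ∂μ = 0 := by
  obtain ⟨w, b, -⟩ := exists_hilbertBasis ℝ E
  have := b.orthonormal.countable
  refine (b.hasSum_integral_inner_mul_inner hX hY).unique ?_
  simpa only [fun i ω => real_inner_comm (Y ω) (b i), h] using hasSum_zero

theorem integral_inner_apply_eq_zero_of_integral_inner_mul_inner_eq_zero [CompleteSpace E]
    [CompleteSpace F] [SecondCountableTopology F] {X : Ω → E} {Y : Ω → F} (hX : MemLp X 2 μ)
    (hY : MemLp Y 2 μ) (h : ∀ (e : E) (c : F), ∫ ω, ⟪X ω, e⟫_ℝ * ⟪Y ω, c⟫_ℝ ∂μ = 0)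
    (A : F →L[ℝ] E) : ∫ ω, ⟪X ω, A (Y ω)⟫_ℝ ∂μ = 0 := by
  simp_rw [← ContinuousLinearMap.adjoint_inner_left]
  refine integral_inner_eq_zero_of_integral_inner_mul_inner_eq_zero
    ((ContinuousLinearMap.adjoint A).comp_memLp' hX) hY fun a c => ?_
  simpa only [Function.comp_apply, ContinuousLinearMap.adjoint_inner_left] using h (A a) c

end IntegralInner

section Covariance

variable {μ : Measure Ω} {E F : Type*} [NormedAddCommGroup E] [InnerProductSpace ℝ E]
  [NormedAddCommGroup F] [InnerProductSpace ℝ F] [CompleteSpace E] [CompleteSpace F]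

theorem integral_sub_integral_eq_zero [IsProbabilityMeasure μ] {X : Ω → E}
    (hX : Integrable X μ) :
    ∫ ω, (X ω - ∫ ω', X ω' ∂μ) ∂μ = 0 := by
  rw [integral_sub hX (integrable_const _), integral_const, probReal_univ, one_smul, sub_self]

theorem integral_inner_residual_eq_zero [IsProbabilityMeasure μ] {X : Ω → E} {Y : Ω → F}
    (hX : Integrable X μ) (hY : Integrable Y μ) (T : F →L[ℝ] E) (c : E) :
    ∫ ω, ⟪X ω - ∫ ω', X ω' ∂μ - T (Y ω - ∫ ω', Y ω' ∂μ), c⟫_ℝ ∂μ = 0 := by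
  have hXc : Integrable (fun ω => X ω - ∫ ω', X ω' ∂μ) μ := hX.sub' (integrable_const _)
  have hYc : Integrable (fun ω => Y ω - ∫ ω', Y ω' ∂μ) μ := hY.sub' (integrable_const _)
  simp_rw [real_inner_comm c]
  rw [integral_inner (hXc.sub' (T.integrable_comp hYc)), integral_sub hXc (T.integrable_comp hYc),
    T.integral_comp_comm hYc, integral_sub_integral_eq_zero hX, integral_sub_integral_eq_zero hY,
    map_zero, sub_zero, inner_zero_right]

theorem inner_cov_apply [IsFiniteMeasure μ] {X : Ω → E} {Y : Ω → F} (hX : MemLp X 2 μ)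
    (hY : MemLp Y 2 μ) (f : F) (e : E) :
    ⟪cov μ X Y f, e⟫_ℝ =
      ∫ ω, ⟪Y ω - ∫ ω', Y ω' ∂μ, f⟫_ℝ * ⟪X ω - ∫ ω', X ω' ∂μ, e⟫_ℝ ∂μ := by
  have hXc : MemLp (fun ω => X ω - ∫ ω', X ω' ∂μ) 2 μ := hX.sub (memLp_const _)
  have hYf : MemLp (fun ω => ⟪Y ω - ∫ ω', Y ω' ∂μ, f⟫_ℝ) 2 μ :=
    (hY.sub (memLp_const _)).inner_const f
  rw [cov, real_inner_comm, ← integral_inner (by exact (hXc.smul hYf).integrable le_rfl)]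
  simp only [real_inner_smul_right, real_inner_comm e]

theorem integral_inner_residual_mul_inner_eq_zero [IsFiniteMeasure μ] {X : Ω → E} {Y : Ω → F}
    (hX : MemLp X 2 μ) (hY : MemLp Y 2 μ) {Q : E →L[ℝ] F}
    (hQ : ∀ e, cov μ Y Y (Q e) = cov μ Y X e) (e : E) (c : F) :
    ∫ ω, ⟪X ω - ∫ ω', X ω' ∂μ - ContinuousLinearMap.adjoint Q (Y ω - ∫ ω', Y ω' ∂μ), e⟫_ℝ *
      ⟪Y ω - ∫ ω', Y ω' ∂μ, c⟫_ℝ ∂μ = 0 := by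
  have hXe : MemLp (fun ω => ⟪X ω - ∫ ω', X ω' ∂μ, e⟫_ℝ) 2 μ :=
    (hX.sub (memLp_const _)).inner_const e
  have hYc : ∀ y : F, MemLp (fun ω => ⟪Y ω - ∫ ω', Y ω' ∂μ, y⟫_ℝ) 2 μ := fun y =>
    (hY.sub (memLp_const _)).inner_const y
  have hsplit : ∀ ω,
      ⟪X ω - ∫ ω', X ω' ∂μ - ContinuousLinearMap.adjoint Q (Y ω - ∫ ω', Y ω' ∂μ), e⟫_ℝ *
        ⟪Y ω - ∫ ω', Y ω' ∂μ, c⟫_ℝ =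
      ⟪X ω - ∫ ω', X ω' ∂μ, e⟫_ℝ * ⟪Y ω - ∫ ω', Y ω' ∂μ, c⟫_ℝ -
        ⟪Y ω - ∫ ω', Y ω' ∂μ, Q e⟫_ℝ * ⟪Y ω - ∫ ω', Y ω' ∂μ, c⟫_ℝ := fun ω => by
    rw [inner_sub_left, ContinuousLinearMap.adjoint_inner_left, sub_mul]
  rw [integral_congr_ae (Eventually.of_forall hsplit),
    integral_sub (by exact hXe.integrable_mul (hYc c))
      (by exact (hYc (Q e)).integrable_mul (hYc c)),
    ← inner_cov_apply hY hY, ← inner_cov_apply hY hX, hQ, sub_self]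

end Covariance

section AffineTransformations

variable {μ : Measure Ω} {G H : Type*} [NormedAddCommGroup G] [InnerProductSpace ℝ G]
  [NormedAddCommGroup H] [InnerProductSpace ℝ H]

theorem inner_eq_zero_of_mem_closure_affSet [IsFiniteMeasure μ] {R : Lp G 2 μ} {V : Lp H 2 μ}
    (m : H) (hmean : ∀ c : G, ∫ ω, ⟪R ω, c⟫_ℝ ∂μ = 0)
    (hlin : ∀ A : H →L[ℝ] G, ∫ ω, ⟪R ω, A (V ω - m)⟫_ℝ ∂μ = 0) {s : Lp G 2 μ}
    (hs : s ∈ closure (affSet μ V)) : ⟪R, s⟫_ℝ = 0 := by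
  refine closure_minimal ?_
    (isClosed_eq (continuous_const.inner continuous_id) continuous_const) hs
  rintro s ⟨b, A, hsV⟩
  have hsplit : ∀ᵐ ω ∂μ, ⟪R ω, s ω⟫_ℝ = ⟪R ω, b + A m⟫_ℝ + ⟪R ω, A (V ω - m)⟫_ℝ := by
    filter_upwards [hsV] with ω hω
    rw [hω, ← inner_add_right, map_sub, add_add_sub_cancel]
  have hR := Lp.memLp R
  have hAV : MemLp (fun ω => A (V ω - m)) 2 μ :=
    A.comp_memLp' ((Lp.memLp V).sub (memLp_const m))
  show ⟪R, s⟫_ℝ = 0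
  rw [L2.inner_def, integral_congr_ae hsplit,
    integral_add ((hR.inner_const _).integrable one_le_two) (hR.integrable_inner hAV),
    hmean, hlin, add_zero]

end AffineTransformations

theorem lce_formula_compatible_case_general
    (μ : Measure Ω) [IsProbabilityMeasure μ]
    {G H : Type*}
    [NormedAddCommGroup G] [InnerProductSpace ℝ G] [CompleteSpace G]
    [NormedAddCommGroup H] [InnerProductSpace ℝ H] [CompleteSpace H] [SecondCountableTopology H]
    (U : Lp G 2 μ) (V : Lp H 2 μ)
    (CV : H →L[ℝ] H) (CVU : G →L[ℝ] H)
    (hCV : ∀ h : H, CV h =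
      ∫ ω, (@inner ℝ _ _ (V ω - ∫ ω', V ω' ∂μ) h) • (V ω - ∫ ω', V ω' ∂μ) ∂μ)
    (hCVU : ∀ g : G, CVU g =
      ∫ ω, (@inner ℝ _ _ (U ω - ∫ ω', U ω' ∂μ) g) • (V ω - ∫ ω', V ω' ∂μ) ∂μ)
    (hrange : Set.range CVU ⊆ Set.range CV) :
    (∃! Q : G →L[ℝ] H,
      CV.comp Q = CVU ∧ ∀ g : G, Q g ∈ (LinearMap.ker (CV : H →ₗ[ℝ] H))ᗮ) ∧
    (∀ Q : G →L[ℝ] H,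
      (CV.comp Q = CVU ∧ ∀ g : G, Q g ∈ (LinearMap.ker (CV : H →ₗ[ℝ] H))ᗮ) →
      ∀ UA : Lp G 2 μ,
        ((UA : Ω → G) =ᵐ[μ] fun ω =>
          (∫ ω', U ω' ∂μ) +
            (ContinuousLinearMap.adjoint Q) (V ω - ∫ ω', V ω' ∂μ)) →
        IsLCE μ U UA V) := by
  refine ⟨CV.existsUnique_comp_eq_of_range_subset CVU hrange, ?_⟩
  rintro Q ⟨hQ, -⟩ UA hUA
  have hcov : ∀ g, cov μ V V (Q g) = cov μ V U g := fun g =>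
    (hCV (Q g)).symm.trans ((DFunLike.congr_fun hQ g).trans (hCVU g))
  set Q' := ContinuousLinearMap.adjoint Q
  have hVc : MemLp (fun ω => V ω - ∫ ω', V ω' ∂μ) 2 μ := (Lp.memLp V).sub (memLp_const _)
  have hW : MemLp (fun ω => U ω - ∫ ω', U ω' ∂μ - Q' (V ω - ∫ ω', V ω' ∂μ)) 2 μ :=
    ((Lp.memLp U).sub (memLp_const _)).sub (Q'.comp_memLp' hVc)
  have hRW : ⇑(U - UA) =ᵐ[μ] fun ω => U ω - ∫ ω', U ω' ∂μ - Q' (V ω - ∫ ω', V ω' ∂μ) := by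
    filter_upwards [Lp.coeFn_sub U UA, hUA] with ω h₁ h₂
    rw [h₁, Pi.sub_apply, h₂, sub_add_eq_sub_sub]
  refine ⟨subset_closure ⟨∫ ω', U ω' ∂μ - Q' (∫ ω', V ω' ∂μ), Q', hUA.trans ?_⟩,
    fun s hs => inner_eq_zero_of_mem_closure_affSet (∫ ω', V ω' ∂μ) (fun c => ?_) (fun A => ?_)
      hs⟩
  · exact Eventually.of_forall fun ω => by simp only [map_sub]; abel
  · rw [integral_congr_ae (hRW.mono fun ω h => congrArg (⟪·, c⟫_ℝ) h)]
    exact integral_inner_residual_eq_zero (Lp.memLp U |>.integrable one_le_two)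
      (Lp.memLp V |>.integrable one_le_two) Q' c
  · rw [integral_congr_ae (hRW.mono fun ω h => congrArg (⟪·, A (V ω - ∫ ω', V ω' ∂μ)⟫_ℝ) h)]
    exact integral_inner_apply_eq_zero_of_integral_inner_mul_inner_eq_zero hW hVc
      (integral_inner_residual_mul_inner_eq_zero (Lp.memLp U) (Lp.memLp V) hcov) A

/-- Formula for the LCE in the compatible case: if `ran C_{VU} ⊆ ran C_V`,
then `Q := C_V† C_{VU} : G → H` is a well-defined bounded operator (the unique bounded operator
with `C_V Q = C_{VU}` and range in `(ker C_V)ᗮ`), and the affine map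
`γ(v) = μ_U + Q*(v − μ_V)` satisfies `E^A[U|V] = γ ∘ V` almost surely. -/
theorem lce_formula_compatible_case
    (μ : Measure Ω) [IsProbabilityMeasure μ]
    {G H : Type*}
    [NormedAddCommGroup G] [InnerProductSpace ℝ G] [CompleteSpace G] [SecondCountableTopology G]
    [NormedAddCommGroup H] [InnerProductSpace ℝ H] [CompleteSpace H] [SecondCountableTopology H]
    (U : Lp G 2 μ) (V : Lp H 2 μ)
    (CV : H →L[ℝ] H) (CVU : G →L[ℝ] H)
    (hCV : ∀ h : H, CV h =
      ∫ ω, (@inner ℝ _ _ (V ω - ∫ ω', V ω' ∂μ) h) • (V ω - ∫ ω', V ω' ∂μ) ∂μ)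
    (hCVU : ∀ g : G, CVU g =
      ∫ ω, (@inner ℝ _ _ (U ω - ∫ ω', U ω' ∂μ) g) • (V ω - ∫ ω', V ω' ∂μ) ∂μ)
    (hrange : Set.range CVU ⊆ Set.range CV) :
    (∃! Q : G →L[ℝ] H,
      CV.comp Q = CVU ∧ ∀ g : G, Q g ∈ (LinearMap.ker (CV : H →ₗ[ℝ] H))ᗮ) ∧
    (∀ Q : G →L[ℝ] H,
      (CV.comp Q = CVU ∧ ∀ g : G, Q g ∈ (LinearMap.ker (CV : H →ₗ[ℝ] H))ᗮ) →
      ∀ UA : Lp G 2 μ,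
        ((UA : Ω → G) =ᵐ[μ] fun ω =>
          (∫ ω', U ω' ∂μ) +
            (ContinuousLinearMap.adjoint Q) (V ω - ∫ ω', V ω' ∂μ)) →
        IsLCE μ U UA V) :=
  lce_formula_compatible_case_general μ U V CV CVU hCV hCVU hrange
end
end

section
/- If the covariance operator C_V has closed range (in particular, if H is finite-dimensional), then ran C_{VU} ⊆ ran C_V. -/
open MeasureTheory

noncomputable section

variable {Ω : Type*} [MeasurableSpace Ω]

/-!
For closed `ran C_V` we have `ran C_V = (ran C_V)ᗮᗮ`, so it suffices that every `x ⊥ ran C_V`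
is orthogonal to `C_{VU} g`. Such an `x` satisfies `0 = ⟪x, C_V x⟫ = E ⟪V - E V, x⟫²`, so
`⟪V - E V, x⟫ = 0` almost surely, and then `⟪x, C_{VU} g⟫ = E[⟪U - E U, g⟫ ⟪x, V - E V⟫] = 0`.
-/

section InnerProduct

variable {E : Type*} [NormedAddCommGroup E] [InnerProductSpace ℝ E] [CompleteSpace E]

open scoped RealInnerProductSpace

theorem ContinuousLinearMap.mem_range_of_isClosed_range_of_forall_orthogonal
    {F : Type*} [NormedAddCommGroup F] [NormedSpace ℝ F]
    (T : F →L[ℝ] E) (hT : IsClosed (Set.range T)) {y : E}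
    (hy : ∀ x, (∀ z, ⟪x, T z⟫ = 0) → ⟪x, y⟫ = 0) : y ∈ Set.range T := by
  let K := LinearMap.range (T : F →ₗ[ℝ] E)
  have hK : (K : Set E) = Set.range T := LinearMap.coe_range _
  have hy' : y ∈ Kᗮᗮ := (Submodule.mem_orthogonal _ _).2 fun x hx =>
    real_inner_comm x y ▸ hy x fun z => (Submodule.mem_orthogonal' K x).1 hx _ ⟨z, rfl⟩
  rwa [Submodule.orthogonal_orthogonal_eq_closure, ← SetLike.mem_coe,
    Submodule.topologicalClosure_coe, hK, hT.closure_eq] at hy'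

variable {μ : Measure Ω} {v : Ω → E}

theorem ae_inner_eq_zero_of_inner_integral_inner_smul_eq_zero (hv : MemLp v 2 μ) {x : E}
    (hx : ⟪x, ∫ ω, ⟪v ω, x⟫ • v ω ∂μ⟫ = 0) : ∀ᵐ ω ∂μ, ⟪v ω, x⟫ = 0 := by
  have hsq : ⟪x, ∫ ω, ⟪v ω, x⟫ • v ω ∂μ⟫ = ∫ ω, ⟪v ω, x⟫ ^ 2 ∂μ := by
    have hint : MemLp (fun ω => ⟪v ω, x⟫ • v ω) 1 μ := hv.smul (hv.inner_const x)
    rw [← integral_inner (memLp_one_iff_integrable.1 hint) x]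
    simp only [real_inner_smul_right, real_inner_comm x, sq]
  have hzero := (integral_eq_zero_iff_of_nonneg (fun ω => sq_nonneg _)
    (hv.inner_const x).integrable_sq).1 (hsq ▸ hx)
  filter_upwards [hzero] with ω hω using pow_eq_zero_iff two_ne_zero |>.1 hω

theorem inner_integral_smul_eq_zero_of_ae_inner_eq_zero (a : Ω → ℝ) {x : E}
    (hx : ∀ᵐ ω ∂μ, ⟪v ω, x⟫ = 0) : ⟪x, ∫ ω, a ω • v ω ∂μ⟫ = 0 := by
  by_cases hint : Integrable (fun ω => a ω • v ω) μ
  · rw [← integral_inner hint]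
    refine integral_eq_zero_of_ae ?_
    filter_upwards [hx] with ω hω
    rw [real_inner_smul_right, real_inner_comm, hω, mul_zero, Pi.zero_apply]
  · simp [integral_undef hint]

end InnerProduct

theorem range_crossCov_subset_range_cov_of_closedRange_general
    (μ : Measure Ω) [IsProbabilityMeasure μ]
    {G H : Type*}
    [NormedAddCommGroup G] [InnerProductSpace ℝ G]
    [NormedAddCommGroup H] [InnerProductSpace ℝ H] [CompleteSpace H]
    (U : Lp G 2 μ) (V : Lp H 2 μ)
    (CV : H →L[ℝ] H) (CVU : G →L[ℝ] H)
    (hCV : ∀ h : H, CV h =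
      ∫ ω, (@inner ℝ _ _ (V ω - ∫ ω', V ω' ∂μ) h) • (V ω - ∫ ω', V ω' ∂μ) ∂μ)
    (hCVU : ∀ g : G, CVU g =
      ∫ ω, (@inner ℝ _ _ (U ω - ∫ ω', U ω' ∂μ) g) • (V ω - ∫ ω', V ω' ∂μ) ∂μ)
    (hclosed : IsClosed (Set.range CV)) :
    Set.range CVU ⊆ Set.range CV := by
  rintro _ ⟨g, rfl⟩
  have hV : MemLp (fun ω => V ω - ∫ ω', V ω' ∂μ) 2 μ := (Lp.memLp V).sub (memLp_const _)
  refine CV.mem_range_of_isClosed_range_of_forall_orthogonal hclosed fun x hx => ?_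
  rw [hCVU]
  refine inner_integral_smul_eq_zero_of_ae_inner_eq_zero _
    (ae_inner_eq_zero_of_inner_integral_inner_smul_eq_zero hV ?_)
  rw [← hCV]
  exact hx x

/-- If the covariance operator `C_V` has closed range (in particular, if `H`
is finite-dimensional), then `ran C_{VU} ⊆ ran C_V`. -/
theorem range_crossCov_subset_range_cov_of_closedRange
    (μ : Measure Ω) [IsProbabilityMeasure μ]
    {G H : Type*}
    [NormedAddCommGroup G] [InnerProductSpace ℝ G] [CompleteSpace G] [SecondCountableTopology G]
    [NormedAddCommGroup H] [InnerProductSpace ℝ H] [CompleteSpace H] [SecondCountableTopology H]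
    (U : Lp G 2 μ) (V : Lp H 2 μ)
    (CV : H →L[ℝ] H) (CVU : G →L[ℝ] H)
    (hCV : ∀ h : H, CV h =
      ∫ ω, (@inner ℝ _ _ (V ω - ∫ ω', V ω' ∂μ) h) • (V ω - ∫ ω', V ω' ∂μ) ∂μ)
    (hCVU : ∀ g : G, CVU g =
      ∫ ω, (@inner ℝ _ _ (U ω - ∫ ω', U ω' ∂μ) g) • (V ω - ∫ ω', V ω' ∂μ) ∂μ)
    (hclosed : IsClosed (Set.range CV)) :
    Set.range CVU ⊆ Set.range CV :=
  range_crossCov_subset_range_cov_of_closedRange_general μ U V CV CVU hCV hCVU hclosed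
end
end

section
/- Explicit formula for the average linear conditional covariance: Cov_V^A[U,W] = C_{UW} − M_{VU}* M_{VW}, where M_{VU} := (C_V^{1/2})† C_{VU}; in particular, in the compatible case ran C_{VW} ⊆ ran C_V, Cov_V^A[U,W] = C_{UW} − C_{UV} C_V† C_{VW}. -/
/-!
Pair both sides with `g ∈ G`, `f ∈ F` and work in `L²(P;ℝ)` with the centred coordinates
`X_e := ⟪X - E X, e⟫`, so that `⟪Cov[X,Y] f, e⟫ = ⟪Y_f, X_e⟫`. Since `W - E^A[W|V]` is orthogonal
to every limit of affine functions of `V`, in particular to the coordinates of `E^A[U|V]` (which are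
limits of coordinates `V_h`), the residual covariance pairs to `⟪C_{UW} f, g⟫ - ⟪U_g, E^A[W|V]_f⟫`.

By the covariance identities, `h ↦ V_h` and `h ↦ C_V^{1/2} h` have the same Gram matrix, and `U_g`,
`E^A[W|V]_f` pair with the `V_h` as `M_{VU} g`, `M_{VW} f` pair with the `C_V^{1/2} h`.
Approximating `M_{VU} g ∈ closure (ran C_V^{1/2})` by `C_V^{1/2} h` and `E^A[W|V]_f` by the `V_h`
gives `⟪U_g, E^A[W|V]_f⟫ = ⟪M_{VU} g, M_{VW} f⟫`. In the compatible case
`C_V^{1/2} Q_W f = M_{VW} f`, as both lie in `(ker C_V^{1/2})ᗮ` and have the same image.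
-/

open MeasureTheory

noncomputable section

variable {Ω : Type*} [MeasurableSpace Ω]

open scoped RealInnerProductSpace

section Hilbert
variable {𝕜 ι E F K : Type*}

theorem LinearMap.injOn_orthogonal_ker [RCLike 𝕜] [NormedAddCommGroup E] [InnerProductSpace 𝕜 E]
    [AddCommGroup F] [Module 𝕜 F] (A : E →ₗ[𝕜] F) : Set.InjOn A (LinearMap.ker A)ᗮ :=
  fun x hx y hy hxy => sub_eq_zero.1 <|
    Submodule.disjoint_def.1 (Submodule.orthogonal_disjoint _) _ (by simp [hxy]) (sub_mem hx hy)

variable [NormedAddCommGroup E] [InnerProductSpace ℝ E]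

theorem LinearMap.IsSymmetric.orthogonal_ker_eq_closure_range [CompleteSpace E] {S : E →L[ℝ] E}
    (hS : (S : E →ₗ[ℝ] E).IsSymmetric) :
    ((LinearMap.ker (S : E →ₗ[ℝ] E))ᗮ : Set E) = closure (Set.range S) := by
  rw [← hS.orthogonal_range, Submodule.orthogonal_orthogonal_eq_closure,
    Submodule.topologicalClosure_coe, LinearMap.coe_range, ContinuousLinearMap.coe_coe]

theorem LinearMap.IsSymmetric.adjoint_apply_eq_of_comp_eq [CompleteSpace E]
    [NormedAddCommGroup F] [InnerProductSpace ℝ F] [CompleteSpace F] {S C : E →L[ℝ] E}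
    (hS : (S : E →ₗ[ℝ] E).IsSymmetric) (hSS : S.comp S = C) {M N : F →L[ℝ] E} (hM : S.comp M = N)
    {n q : E} (hn : n ∈ (LinearMap.ker (S : E →ₗ[ℝ] E))ᗮ) (hq : C q = S n) :
    N.adjoint q = M.adjoint n := by
  have hSq_mem : S q ∈ (LinearMap.ker (S : E →ₗ[ℝ] E))ᗮ := by
    rw [← SetLike.mem_coe, hS.orthogonal_ker_eq_closure_range]
    exact subset_closure ⟨q, rfl⟩
  have hSq : S q = n :=
    LinearMap.injOn_orthogonal_ker (S : E →ₗ[ℝ] E) hSq_mem hn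
      (show S (S q) = S n by rw [← hq, ← hSS]; rfl)
  refine ext_inner_left ℝ fun g => ?_
  rw [ContinuousLinearMap.adjoint_inner_right, ContinuousLinearMap.adjoint_inner_right, ← hM,
    ContinuousLinearMap.comp_apply]
  exact (hS (M g) q).trans (congrArg _ hSq)

variable [NormedAddCommGroup K] [InnerProductSpace ℝ K]

theorem inner_eq_of_isometric_pairing {T : ι → K} {S : ι → E}
    (hTS : ∀ i j, ⟪T i, T j⟫ = ⟪S i, S j⟫) {x y : K} {m n : E}
    (hm : m ∈ closure (Set.range S)) (hxm : ∀ j, ⟪x, T j⟫ = ⟪m, S j⟫)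
    (hy : y ∈ closure (Set.range T)) (hyn : ∀ i, ⟪T i, y⟫ = ⟪S i, n⟫) :
    ⟪x, y⟫ = ⟪m, n⟫ := by
  have hnorm : ∀ j, ‖S j‖ = ‖T j‖ := fun j => by
    rw [norm_eq_sqrt_real_inner, norm_eq_sqrt_real_inner, hTS]
  have hx_sub : ∀ i, |⟪x - T i, y⟫| ≤ ‖m - S i‖ * ‖y‖ := fun i => by
    refine closure_minimal (t := {z | |⟪x - T i, z⟫| ≤ ‖m - S i‖ * ‖z‖}) ?_
      (isClosed_le (by fun_prop) (by fun_prop)) hy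
    rintro _ ⟨j, rfl⟩
    rw [Set.mem_ofPred_eq, inner_sub_left, hxm, hTS, ← inner_sub_left, ← hnorm]
    exact abs_real_inner_le_norm _ _
  have hdefect : ∀ z ∈ Set.range S, |⟪x, y⟫ - ⟪m, n⟫| ≤ ‖m - z‖ * (‖y‖ + ‖n‖) := by
    rintro _ ⟨i, rfl⟩
    have hsplit : ⟪x, y⟫ - ⟪m, n⟫ = ⟪x - T i, y⟫ - ⟪m - S i, n⟫ := by
      rw [inner_sub_left, inner_sub_left, hyn]; ring
    rw [hsplit, mul_add]
    exact (abs_sub _ _).trans (add_le_add (hx_sub i) (abs_real_inner_le_norm _ _))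
  have := closure_minimal (t := {z | |⟪x, y⟫ - ⟪m, n⟫| ≤ ‖m - z‖ * (‖y‖ + ‖n‖)}) hdefect
    (isClosed_le (by fun_prop) (by fun_prop)) hm
  simpa [sub_eq_zero] using this

end Hilbert

section Centered
variable {μ : Measure Ω} {E F : Type*} [NormedAddCommGroup E] [InnerProductSpace ℝ E]
  [NormedAddCommGroup F] [InnerProductSpace ℝ F]

theorem cov_congr_ae [CompleteSpace E] [CompleteSpace F] {X X' : Ω → E} {Y Y' : Ω → F}
    (hX : X =ᵐ[μ] X') (hY : Y =ᵐ[μ] Y') :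
    cov μ X Y = cov μ X' Y' := by
  ext f
  simp only [cov, integral_congr_ae hX, integral_congr_ae hY]
  refine integral_congr_ae ?_
  filter_upwards [hX, hY] with ω hXω hYω
  rw [hXω, hYω]

variable [IsFiniteMeasure μ]

variable (μ) in
/-- The class of `ω ↦ ⟪X ω - E X, e⟫`; the mean enters as the `L²` inner product of `X` with the
constant `e`, which makes the map visibly continuous and linear in `X`. -/
def centeredInner (e : E) : Lp E 2 μ →L[ℝ] Lp ℝ 2 μ :=
  (innerSL ℝ e).compLpL 2 μ - (Lp.constL 2 μ ℝ).comp (innerSL ℝ (Lp.const 2 μ e))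

variable [CompleteSpace E] [CompleteSpace F]

theorem inner_integral_eq_inner_const (X : Lp E 2 μ) (e : E) :
    ⟪e, (∫ ω, X ω ∂μ)⟫ = ⟪Lp.const 2 μ e, X⟫ := by
  rw [← integral_inner ((Lp.memLp X).integrable one_le_two), L2.inner_def]
  refine integral_congr_ae ?_
  filter_upwards [Lp.coeFn_const 2 μ e] with ω he
  rw [he]; rfl

theorem coeFn_centeredInner (e : E) (X : Lp E 2 μ) :
    centeredInner μ e X =ᵐ[μ] fun ω => ⟪X ω - (∫ ω', X ω' ∂μ), e⟫ := by
  filter_upwards [Lp.coeFn_sub ((innerSL ℝ e).compLpL 2 μ X) (Lp.const 2 μ ⟪Lp.const 2 μ e, X⟫),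
    (innerSL ℝ e).coeFn_compLpL X, Lp.coeFn_const 2 μ ⟪Lp.const 2 μ e, X⟫] with ω h1 h2 h3
  change ((innerSL ℝ e).compLpL 2 μ X - Lp.const 2 μ ⟪Lp.const 2 μ e, X⟫ : Lp ℝ 2 μ) ω = _
  rw [h1, Pi.sub_apply, h2, h3, inner_sub_left, ← inner_integral_eq_inner_const,
    real_inner_comm e, real_inner_comm e]
  rfl

theorem centeredInner_compLpL (B : E →L[ℝ] F) (f : F) (X : Lp E 2 μ) :
    centeredInner μ f (B.compLpL 2 μ X) = centeredInner μ (B.adjoint f) X := by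
  have hmean : ∫ ω, B.compLpL 2 μ X ω ∂μ = B (∫ ω, X ω ∂μ) := by
    rw [integral_congr_ae (B.coeFn_compLpL X),
      B.integral_comp_comm ((Lp.memLp X).integrable one_le_two)]
  refine Lp.ext ?_
  filter_upwards [coeFn_centeredInner f (B.compLpL 2 μ X), coeFn_centeredInner (B.adjoint f) X,
    B.coeFn_compLpL X] with ω h1 h2 h3
  rw [h1, h2, h3, hmean, ← map_sub, B.adjoint_inner_right]

theorem inner_cov_apply_s18 (X : Lp E 2 μ) (Y : Lp F 2 μ) (f : F) (e : E) :
    ⟪cov μ X Y f, e⟫ = ⟪centeredInner μ f Y, centeredInner μ e X⟫ := by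
  have hint : Integrable (fun ω => ⟪Y ω - (∫ ω', Y ω' ∂μ), f⟫ • (X ω - ∫ ω', X ω' ∂μ)) μ :=
    memLp_one_iff_integrable.mp <| ((Lp.memLp X).sub (memLp_const _)).smul (r := 1)
      (((Lp.memLp Y).sub (memLp_const _)).inner_const f)
  rw [cov, real_inner_comm, ← integral_inner hint, L2.inner_def]
  refine integral_congr_ae ?_
  filter_upwards [coeFn_centeredInner f Y, coeFn_centeredInner e X] with ω hY hX
  rw [hY, hX, real_inner_smul_right, real_inner_comm e, RCLike.inner_apply', conj_trivial]

end Centered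

section Affine
variable {μ : Measure Ω} {E F H : Type*} [NormedAddCommGroup E] [InnerProductSpace ℝ E]
  [NormedAddCommGroup F] [InnerProductSpace ℝ F] [NormedAddCommGroup H] [InnerProductSpace ℝ H]
  {V : Lp H 2 μ}

theorem const_mem_affSet [IsFiniteMeasure μ] (b : E) : Lp.const 2 μ b ∈ affSet μ V :=
  ⟨b, 0, by filter_upwards [Lp.coeFn_const 2 μ b] with ω h; rw [h]; simp⟩

theorem eq_const_add_compLpL_of_mem_affSet [IsFiniteMeasure μ] {s : Lp E 2 μ}
    (hs : s ∈ affSet μ V) : ∃ (b : E) (B : H →L[ℝ] E), s = Lp.const 2 μ b + B.compLpL 2 μ V := by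
  obtain ⟨b, B, hsV⟩ := hs
  refine ⟨b, B, Lp.ext ?_⟩
  filter_upwards [hsV, Lp.coeFn_add (Lp.const 2 μ b) (B.compLpL 2 μ V), Lp.coeFn_const 2 μ b,
    B.coeFn_compLpL V] with ω h1 h2 h3 h4
  rw [h1, h2, Pi.add_apply, h3, h4]
  rfl

theorem compLpL_mem_closure_affSet (A : E →L[ℝ] F) {s : Lp E 2 μ}
    (hs : s ∈ closure (affSet μ V)) : A.compLpL 2 μ s ∈ closure (affSet μ V) := by
  refine map_mem_closure (A.compLpL 2 μ).continuous hs ?_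
  rintro x ⟨b, B, hx⟩
  refine ⟨A b, A.comp B, ?_⟩
  filter_upwards [A.coeFn_compLpL x, hx] with ω h1 h2
  rw [h1, h2, map_add]
  rfl

variable [IsProbabilityMeasure μ]

theorem centeredInner_const [CompleteSpace E] (e b : E) :
    centeredInner μ e (Lp.const 2 μ b) = 0 := by
  refine Lp.ext ?_
  filter_upwards [coeFn_centeredInner e (Lp.const 2 μ b), Lp.coeFn_const 2 μ b,
    Lp.coeFn_zero ℝ 2 μ] with ω h1 h2 h3
  rw [h1, h3, integral_congr_ae (Lp.coeFn_const 2 μ b), h2]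
  simp

variable [CompleteSpace H]

theorem centeredInner_mem_affSet (h : H) : centeredInner μ h V ∈ affSet μ V := by
  refine ⟨-⟪(∫ ω, V ω ∂μ), h⟫, innerSL ℝ h, ?_⟩
  filter_upwards [coeFn_centeredInner h V] with ω hω
  rw [hω, inner_sub_left, innerSL_apply_apply, real_inner_comm h]
  ring

theorem centeredInner_mem_closure_range [CompleteSpace F] {s : Lp F 2 μ}
    (hs : s ∈ closure (affSet μ V)) (f : F) :
    centeredInner μ f s ∈ closure (Set.range fun h => centeredInner μ h V) := by
  refine map_mem_closure (centeredInner μ f).continuous hs ?_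
  intro x hx
  obtain ⟨b, B, rfl⟩ := eq_const_add_compLpL_of_mem_affSet hx
  exact ⟨B.adjoint f, by rw [map_add, centeredInner_const, zero_add, centeredInner_compLpL]⟩

end Affine

theorem inner_compLpL_innerSL {μ : Measure Ω} {F : Type*} [NormedAddCommGroup F]
    [InnerProductSpace ℝ F] (f : F) (Z : Lp F 2 μ) (y : Lp ℝ 2 μ) :
    ⟪(innerSL ℝ f).compLpL 2 μ Z, y⟫ =
      ⟪Z, (ContinuousLinearMap.toSpanSingleton ℝ f).compLpL 2 μ y⟫ := by
  rw [L2.inner_def, L2.inner_def]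
  refine integral_congr_ae ?_
  filter_upwards [(innerSL ℝ f).coeFn_compLpL Z,
    (ContinuousLinearMap.toSpanSingleton ℝ f).coeFn_compLpL y] with ω h1 h2
  rw [h1, h2, innerSL_apply_apply, ContinuousLinearMap.toSpanSingleton_apply,
    real_inner_smul_right, RCLike.inner_apply', conj_trivial, real_inner_comm, mul_comm]

namespace IsLCE
variable {μ : Measure Ω} {F G H : Type*} [NormedAddCommGroup F] [InnerProductSpace ℝ F]
  [NormedAddCommGroup G] [InnerProductSpace ℝ G] [NormedAddCommGroup H] [InnerProductSpace ℝ H]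
  {V : Lp H 2 μ} {U UA : Lp G 2 μ} {W WA : Lp F 2 μ}

theorem centeredInner_sub [IsFiniteMeasure μ] (hWA : IsLCE μ W WA V) (f : F) :
    centeredInner μ f W - centeredInner μ f WA = (innerSL ℝ f).compLpL 2 μ (W - WA) := by
  have hmean : ⟪Lp.const 2 μ f, W - WA⟫ = 0 := by
    rw [real_inner_comm]
    exact hWA.2 _ (subset_closure (const_mem_affSet f))
  rw [← map_sub]
  change (innerSL ℝ f).compLpL 2 μ (W - WA) - Lp.const 2 μ ⟪Lp.const 2 μ f, W - WA⟫ = _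
  rw [hmean, map_zero, sub_zero]

theorem inner_centeredInner_sub_eq_zero [IsFiniteMeasure μ] (hWA : IsLCE μ W WA V) (f : F)
    {y : Lp ℝ 2 μ} (hy : y ∈ closure (affSet μ V)) :
    ⟪centeredInner μ f W - centeredInner μ f WA, y⟫ = 0 := by
  rw [hWA.centeredInner_sub, inner_compLpL_innerSL]
  exact hWA.2 _ (compLpL_mem_closure_affSet _ hy)

variable [IsProbabilityMeasure μ] [CompleteSpace F] [CompleteSpace G] [CompleteSpace H]

theorem inner_cov_sub (hUA : IsLCE μ U UA V) (hWA : IsLCE μ W WA V) (f : F) (g : G) :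
    ⟪cov μ (fun ω => U ω - UA ω) (fun ω => W ω - WA ω) f, g⟫ =
      ⟪cov μ U W f, g⟫ - ⟪centeredInner μ g U, centeredInner μ f WA⟫ := by
  have hcov : cov μ (fun ω => U ω - UA ω) (fun ω => W ω - WA ω) = cov μ ⇑(U - UA) ⇑(W - WA) :=
    cov_congr_ae (Lp.coeFn_sub U UA).symm (Lp.coeFn_sub W WA).symm
  have hUA_mem : centeredInner μ g UA ∈ closure (affSet μ V) :=
    closure_mono (Set.range_subset_iff.2 centeredInner_mem_affSet)
      (centeredInner_mem_closure_range hUA.1 g)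
  rw [hcov, inner_cov_apply_s18, inner_cov_apply_s18, map_sub, map_sub, inner_sub_right,
    hWA.inner_centeredInner_sub_eq_zero f hUA_mem, sub_zero, inner_sub_left,
    real_inner_comm (centeredInner μ g U) (centeredInner μ f WA)]

theorem inner_centeredInner_eq (hWA : IsLCE μ W WA V) (U : Lp G 2 μ) {S : H →L[ℝ] H}
    (hS : (S : H →ₗ[ℝ] H).IsSymmetric) (hSS : ∀ h, S (S h) = cov μ V V h) {f : F} {g : G}
    {m n : H} (hm : m ∈ (LinearMap.ker (S : H →ₗ[ℝ] H))ᗮ) (hSm : S m = cov μ V U g)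
    (hSn : S n = cov μ V W f) :
    ⟪centeredInner μ g U, centeredInner μ f WA⟫ = ⟪m, n⟫ := by
  have hS' : ∀ x y, ⟪S x, y⟫ = ⟪x, S y⟫ := hS
  have hm' : m ∈ closure (Set.range S) := by
    rwa [← hS.orthogonal_ker_eq_closure_range]
  refine inner_eq_of_isometric_pairing (T := fun h => centeredInner μ h V) (fun i j => ?_) hm'
    (fun j => ?_) (centeredInner_mem_closure_range hWA.1 f) (fun i => ?_)
  · rw [hS', hSS, ← real_inner_comm i, inner_cov_apply_s18, real_inner_comm]
  · rw [← hS', hSm, inner_cov_apply_s18]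
  · have hW : ⟪centeredInner μ f W - centeredInner μ f WA, centeredInner μ i V⟫ = 0 :=
      hWA.inner_centeredInner_sub_eq_zero f (subset_closure (centeredInner_mem_affSet i))
    rw [inner_sub_left, sub_eq_zero] at hW
    rw [hS', hSn, ← real_inner_comm i, inner_cov_apply_s18, hW, real_inner_comm]

end IsLCE

theorem alcc_explicit_formula_general
    (μ : Measure Ω) [IsProbabilityMeasure μ]
    {F G H : Type*}
    [NormedAddCommGroup F] [InnerProductSpace ℝ F] [CompleteSpace F]
    [NormedAddCommGroup G] [InnerProductSpace ℝ G] [CompleteSpace G]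
    [NormedAddCommGroup H] [InnerProductSpace ℝ H] [CompleteSpace H]
    (U UA : Lp G 2 μ) (W WA : Lp F 2 μ) (V : Lp H 2 μ)
    (hUA : IsLCE μ U UA V) (hWA : IsLCE μ W WA V)
    (CV : H →L[ℝ] H) (CVU : G →L[ℝ] H) (CVW : F →L[ℝ] H) (CUW : F →L[ℝ] G)
    (hCV : ∀ h : H, CV h =
      ∫ ω, (@inner ℝ _ _ (V ω - ∫ ω', V ω' ∂μ) h) • (V ω - ∫ ω', V ω' ∂μ) ∂μ)
    (hCVU : ∀ g : G, CVU g =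
      ∫ ω, (@inner ℝ _ _ (U ω - ∫ ω', U ω' ∂μ) g) • (V ω - ∫ ω', V ω' ∂μ) ∂μ)
    (hCVW : ∀ f : F, CVW f =
      ∫ ω, (@inner ℝ _ _ (W ω - ∫ ω', W ω' ∂μ) f) • (V ω - ∫ ω', V ω' ∂μ) ∂μ)
    (hCUW : ∀ f : F, CUW f =
      ∫ ω, (@inner ℝ _ _ (W ω - ∫ ω', W ω' ∂μ) f) • (U ω - ∫ ω', U ω' ∂μ) ∂μ)
    -- `S = C_V^{1/2}`: the (self-adjoint, nonnegative) square root of `C_V`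
    (S : H →L[ℝ] H)
    (hS_sa : ∀ x y : H, @inner ℝ _ _ (S x) y = @inner ℝ _ _ x (S y))
    (hS_sq : S.comp S = CV)
    -- `M_{VU} = S† C_{VU}` and `M_{VW} = S† C_{VW}` (Douglas characterisation)
    (MVU : G →L[ℝ] H) (MVW : F →L[ℝ] H)
    (hMVU : S.comp MVU = CVU ∧ ∀ g : G, MVU g ∈ (LinearMap.ker (S : H →ₗ[ℝ] H))ᗮ)
    (hMVW : S.comp MVW = CVW ∧ ∀ f : F, MVW f ∈ (LinearMap.ker (S : H →ₗ[ℝ] H))ᗮ) :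
    (∀ f : F, cov μ (fun ω => U ω - UA ω) (fun ω => W ω - WA ω) f =
        CUW f - (ContinuousLinearMap.adjoint MVU) (MVW f)) ∧
    (Set.range CVW ⊆ Set.range CV →
      ∀ QW : F →L[ℝ] H,
        (CV.comp QW = CVW ∧ ∀ f : F, QW f ∈ (LinearMap.ker (CV : H →ₗ[ℝ] H))ᗮ) →
        ∀ f : F, cov μ (fun ω => U ω - UA ω) (fun ω => W ω - WA ω) f =
          CUW f - (ContinuousLinearMap.adjoint CVU) (QW f)) := by
  have hS : (S : H →ₗ[ℝ] H).IsSymmetric := hS_sa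
  have hSS : ∀ h, S (S h) = cov μ V V h := fun h => (congrArg (· h) hS_sq).trans (hCV h)
  have hSU : ∀ g, S (MVU g) = cov μ V U g := fun g => (congrArg (· g) hMVU.1).trans (hCVU g)
  have hSW : ∀ f, S (MVW f) = cov μ V W f := fun f => (congrArg (· f) hMVW.1).trans (hCVW f)
  have hUW : ∀ f, CUW f = cov μ U W f := hCUW
  have hexplicit : ∀ f, cov μ (fun ω => U ω - UA ω) (fun ω => W ω - WA ω) f =
      CUW f - MVU.adjoint (MVW f) := fun f => ext_inner_right ℝ fun g => by
    rw [hUA.inner_cov_sub hWA, hWA.inner_centeredInner_eq U hS hSS (hMVU.2 g) (hSU g) (hSW f),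
      inner_sub_left, ContinuousLinearMap.adjoint_inner_left, real_inner_comm (MVW f), hUW]
  refine ⟨hexplicit, fun _ QW hQW f => ?_⟩
  have hQW_f : CV (QW f) = S (MVW f) :=
    (congrArg (· f) hQW.1).trans (congrArg (· f) hMVW.1).symm
  rw [hexplicit, hS.adjoint_apply_eq_of_comp_eq hS_sq hMVU.1 (hMVW.2 f) hQW_f]

/-- Explicit formula for the average linear conditional covariance:
`Cov_V^A[U,W] = C_{UW} − M_{VU}* M_{VW}` where `M_{VU} = (C_V^{1/2})† C_{VU}`;
in particular, in the compatible case `ran C_{VW} ⊆ ran C_V`,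
`Cov_V^A[U,W] = C_{UW} − C_{UV} C_V† C_{VW}` (with `C_{UV} = C_{VU}*`). -/
theorem alcc_explicit_formula
    (μ : Measure Ω) [IsProbabilityMeasure μ]
    {F G H : Type*}
    [NormedAddCommGroup F] [InnerProductSpace ℝ F] [CompleteSpace F] [SecondCountableTopology F]
    [NormedAddCommGroup G] [InnerProductSpace ℝ G] [CompleteSpace G] [SecondCountableTopology G]
    [NormedAddCommGroup H] [InnerProductSpace ℝ H] [CompleteSpace H] [SecondCountableTopology H]
    (U UA : Lp G 2 μ) (W WA : Lp F 2 μ) (V : Lp H 2 μ)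
    (hUA : IsLCE μ U UA V) (hWA : IsLCE μ W WA V)
    (CV : H →L[ℝ] H) (CVU : G →L[ℝ] H) (CVW : F →L[ℝ] H) (CUW : F →L[ℝ] G)
    (hCV : ∀ h : H, CV h =
      ∫ ω, (@inner ℝ _ _ (V ω - ∫ ω', V ω' ∂μ) h) • (V ω - ∫ ω', V ω' ∂μ) ∂μ)
    (hCVU : ∀ g : G, CVU g =
      ∫ ω, (@inner ℝ _ _ (U ω - ∫ ω', U ω' ∂μ) g) • (V ω - ∫ ω', V ω' ∂μ) ∂μ)
    (hCVW : ∀ f : F, CVW f =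
      ∫ ω, (@inner ℝ _ _ (W ω - ∫ ω', W ω' ∂μ) f) • (V ω - ∫ ω', V ω' ∂μ) ∂μ)
    (hCUW : ∀ f : F, CUW f =
      ∫ ω, (@inner ℝ _ _ (W ω - ∫ ω', W ω' ∂μ) f) • (U ω - ∫ ω', U ω' ∂μ) ∂μ)
    -- `S = C_V^{1/2}`: the (self-adjoint, nonnegative) square root of `C_V`
    (S : H →L[ℝ] H)
    (hS_sa : ∀ x y : H, @inner ℝ _ _ (S x) y = @inner ℝ _ _ x (S y))
    (hS_pos : ∀ h : H, 0 ≤ @inner ℝ _ _ (S h) h)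
    (hS_sq : S.comp S = CV)
    -- `M_{VU} = S† C_{VU}` and `M_{VW} = S† C_{VW}` (Douglas characterisation)
    (MVU : G →L[ℝ] H) (MVW : F →L[ℝ] H)
    (hMVU : S.comp MVU = CVU ∧ ∀ g : G, MVU g ∈ (LinearMap.ker (S : H →ₗ[ℝ] H))ᗮ)
    (hMVW : S.comp MVW = CVW ∧ ∀ f : F, MVW f ∈ (LinearMap.ker (S : H →ₗ[ℝ] H))ᗮ) :
    (∀ f : F, cov μ (fun ω => U ω - UA ω) (fun ω => W ω - WA ω) f =
        CUW f - (ContinuousLinearMap.adjoint MVU) (MVW f)) ∧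
    (Set.range CVW ⊆ Set.range CV →
      ∀ QW : F →L[ℝ] H,
        (CV.comp QW = CVW ∧ ∀ f : F, QW f ∈ (LinearMap.ker (CV : H →ₗ[ℝ] H))ᗮ) →
        ∀ f : F, cov μ (fun ω => U ω - UA ω) (fun ω => W ω - WA ω) f =
          CUW f - (ContinuousLinearMap.adjoint CVU) (QW f)) :=
  alcc_explicit_formula_general μ U UA W WA V hUA hWA CV CVU CVW CUW hCV hCVU hCVW hCUW S hS_sa
    hS_sq MVU MVW hMVU hMVW

end
end
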